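/- arXiv:1712.07967 — 3 statements merged into one kernel-verified Lean document; each statement's English description precedes it below -/
import Mathlib

section
/- Let d < e be positive integers and β ∈ (0,1) with 1 - 1/d - 1/e < β < β* := 1 - 1/d + 1/e. Then the function F(x,y) = (x + y - (1-β)·min(dx, ey))² / (4xy) on the positive quadrant {x>0, y>0} attains its infimum at points with y = (d/e)x, and the infimum equals (e + d + ed(β-1))²/(4ed). -/
set_option maxHeartbeats 1000000

/-- For `d < e` positive integers and `1 - 1/d - 1/e < β < β* = 1 - 1/d + 1/e`,
the normalized volume `F(x,y) = (x + y - (1-β)·min(dx,ey))²/(4xy)` on the positive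
quadrant is bounded below by `(e + d + ed(β-1))²/(4ed)`, with equality along
the ray `y = (d/e)x`. -/
theorem normalized_volume_min_quasiregular (d e : ℕ) (hd : 0 < d) (hde : d < e)
    (β : ℝ) (hβ0 : 0 < β) (hβ1 : β < 1)
    (hlow : 1 - 1 / (d : ℝ) - 1 / (e : ℝ) < β)
    (hhigh : β < 1 - 1 / (d : ℝ) + 1 / (e : ℝ)) :
    (∀ x y : ℝ, 0 < x → 0 < y →
      ((e : ℝ) + d + (e : ℝ) * d * (β - 1)) ^ 2 / (4 * (e : ℝ) * d)
        ≤ (x + y - (1 - β) * min ((d : ℝ) * x) ((e : ℝ) * y)) ^ 2 / (4 * x * y)) ∧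
    (∀ x : ℝ, 0 < x →
      (x + ((d : ℝ) / e) * x
          - (1 - β) * min ((d : ℝ) * x) ((e : ℝ) * (((d : ℝ) / e) * x))) ^ 2
          / (4 * x * (((d : ℝ) / e) * x))
        = ((e : ℝ) + d + (e : ℝ) * d * (β - 1)) ^ 2 / (4 * (e : ℝ) * d)) := by
  have hD : (0:ℝ) < d := by exact_mod_cast hd
  have hE : (0:ℝ) < e := by exact_mod_cast hd.trans hde
  have hDE : (d:ℝ) < e := by exact_mod_cast hde
  have hD' : (d:ℝ) ≠ 0 := hD.ne'
  have hE' : (e:ℝ) ≠ 0 := hE.ne'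
  have key1 : (1:ℝ)/d * ((d:ℝ)*e) = e := by field_simp
  have key2 : (1:ℝ)/e * ((d:ℝ)*e) = d := by field_simp
  -- clear denominators in the hypotheses
  have h1 : (1 - β) * ((d:ℝ) * e) < e + d := by
    have h := mul_lt_mul_of_pos_right hlow (mul_pos hD hE)
    nlinarith [h, key1, key2]
  have h2 : (e:ℝ) - d < (1 - β) * ((d:ℝ) * e) := by
    have h := mul_lt_mul_of_pos_right hhigh (mul_pos hD hE)
    nlinarith [h, key1, key2]
  constructor
  · intro x y hx hy
    rw [div_le_div_iff₀ (by positivity) (by positivity)]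
    rcases le_total ((d:ℝ) * x) ((e:ℝ) * y) with h | h
    · rw [min_eq_left h]
      -- a = 1 - (1-β)d ; need |a·e| < d
      have haE1 : (1 - (1 - β) * d) * e < d := by nlinarith
      have haE2 : -(d:ℝ) < (1 - (1 - β) * d) * e := by nlinarith
      have hq : (1 - (1 - β) * d) ^ 2 * e ^ 2 ≤ (d:ℝ) ^ 2 := by nlinarith
      have hsec : (1 - (1 - β) * d) ^ 2 * e * x ≤ (d:ℝ) * y := by
        nlinarith [mul_le_mul_of_nonneg_right hq hx.le,
          mul_le_mul_of_nonneg_left h hD.le]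
      have hprod : 0 ≤ ((e:ℝ) * y - d * x) * ((d:ℝ) * y - (1 - (1 - β) * d) ^ 2 * e * x) :=
        mul_nonneg (by linarith) (by linarith)
      have hid : (x + y - (1 - β) * ((d:ℝ) * x)) ^ 2 * (4 * (e:ℝ) * d)
          - ((e:ℝ) + d + (e:ℝ) * d * (β - 1)) ^ 2 * (4 * x * y)
          = 4 * (((e:ℝ) * y - d * x) * ((d:ℝ) * y - (1 - (1 - β) * d) ^ 2 * e * x)) := by
        ring
      linarith [hprod, hid]
    · rw [min_eq_right h]
      -- b = 1 - (1-β)e ; need |b·d| < e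
      have hbD1 : (1 - (1 - β) * e) * d < e := by nlinarith
      have hbD2 : -(e:ℝ) < (1 - (1 - β) * e) * d := by nlinarith
      have hq : (1 - (1 - β) * e) ^ 2 * d ^ 2 ≤ (e:ℝ) ^ 2 := by nlinarith
      have hsec : (1 - (1 - β) * e) ^ 2 * d * y ≤ (e:ℝ) * x := by
        nlinarith [mul_le_mul_of_nonneg_right hq hy.le,
          mul_le_mul_of_nonneg_left h hE.le]
      have hprod : 0 ≤ ((d:ℝ) * x - e * y) * ((e:ℝ) * x - (1 - (1 - β) * e) ^ 2 * d * y) :=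
        mul_nonneg (by linarith) (by linarith)
      have hid : (x + y - (1 - β) * ((e:ℝ) * y)) ^ 2 * (4 * (e:ℝ) * d)
          - ((e:ℝ) + d + (e:ℝ) * d * (β - 1)) ^ 2 * (4 * x * y)
          = 4 * (((d:ℝ) * x - e * y) * ((e:ℝ) * x - (1 - (1 - β) * e) ^ 2 * d * y)) := by
        ring
      linarith [hprod, hid]
  · intro x hx
    have hmin : (e:ℝ) * (((d:ℝ) / e) * x) = (d:ℝ) * x := by field_simp
    rw [hmin, min_self]
    rw [div_eq_div_iff (by positivity) (by positivity)]
    field_simp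
    ring
end

section
/- Let d < e be positive integers and β ∈ (0,1) with β ≥ β* := 1 - 1/d + 1/e. Then the function F(x,y) = (x + y - (1-β)·min(dx, ey))²/(4xy) on {x>0, y>0} attains its infimum at points with y = (dβ + 1 - d)x, and the infimum equals dβ + 1 - d. -/
/-!
Since `min (d x) (e y) ≤ d x` and `1 - β ≥ 0`, the log discrepancy is at least `γ x + y`, where
`γ = dβ + 1 - d`, and AM-GM gives `(γ x + y)² ≥ 4γ x y`. On the ray `y = γ x` the threshold
`β ≥ β*` says exactly `e γ ≥ d`, so the minimum is `d x` and both inequalities become equalities.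
-/

namespace MonomialValuation

variable (d e β : ℝ)

noncomputable def logDiscrepancy (x y : ℝ) : ℝ := x + y - (1 - β) * min (d * x) (e * y)

noncomputable def normalizedVolume (x y : ℝ) : ℝ := logDiscrepancy d e β x y ^ 2 / (4 * x * y)

/-- The exponent `γ*` of the cone factor `ℂ_{γ*}` of the tangent cone. -/
def coneAngle : ℝ := d * β + 1 - d

variable {d e β}

theorem coneAngle_mul_add_le_logDiscrepancy (hβ : β ≤ 1) (x y : ℝ) :
    coneAngle d β * x + y ≤ logDiscrepancy d e β x y := by
  have := mul_le_mul_of_nonneg_left (min_le_left (d * x) (e * y)) (sub_nonneg.mpr hβ)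
  unfold coneAngle logDiscrepancy
  linarith

theorem logDiscrepancy_of_le {x y : ℝ} (h : d * x ≤ e * y) :
    logDiscrepancy d e β x y = coneAngle d β * x + y := by
  rw [logDiscrepancy, min_eq_left h, coneAngle]
  ring

theorem coneAngle_le_normalizedVolume (hβ : β ≤ 1) (hγ : 0 ≤ coneAngle d β) {x y : ℝ}
    (hx : 0 < x) (hy : 0 < y) : coneAngle d β ≤ normalizedVolume d e β x y := by
  rw [normalizedVolume, le_div_iff₀ (by positivity)]
  calc coneAngle d β * (4 * x * y) = 4 * (coneAngle d β * x) * y := by ring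
    _ ≤ (coneAngle d β * x + y) ^ 2 := four_mul_le_sq_add _ _
    _ ≤ logDiscrepancy d e β x y ^ 2 :=
      pow_le_pow_left₀ (by positivity) (coneAngle_mul_add_le_logDiscrepancy hβ x y) 2

theorem normalizedVolume_coneAngle_ray (h : d ≤ e * coneAngle d β) (hγ : coneAngle d β ≠ 0)
    {x : ℝ} (hx : 0 < x) : normalizedVolume d e β x (coneAngle d β * x) = coneAngle d β := by
  have hmin : d * x ≤ e * (coneAngle d β * x) := by
    rw [← mul_assoc]
    exact mul_le_mul_of_nonneg_right h hx.le
  rw [normalizedVolume, logDiscrepancy_of_le hmin]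
  field_simp
  ring

theorem le_mul_coneAngle (hd : 0 < d) (he : 0 < e) (hthr : 1 - 1 / d + 1 / e ≤ β) :
    d ≤ e * coneAngle d β := by
  have := mul_le_mul_of_nonneg_left hthr (mul_pos hd he).le
  rw [coneAngle]
  field_simp at this
  linarith

end MonomialValuation

open MonomialValuation in
theorem normalized_volume_min_jump_general (d e : ℕ) (hd : 0 < d) (hde : d < e)
    (β : ℝ) (hβ1 : β < 1)
    (hthr : 1 - 1 / (d : ℝ) + 1 / (e : ℝ) ≤ β) :
    (∀ x y : ℝ, 0 < x → 0 < y →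
      (d : ℝ) * β + 1 - d
        ≤ (x + y - (1 - β) * min ((d : ℝ) * x) ((e : ℝ) * y)) ^ 2 / (4 * x * y)) ∧
    (∀ x : ℝ, 0 < x →
      (x + ((d : ℝ) * β + 1 - d) * x
          - (1 - β) * min ((d : ℝ) * x) ((e : ℝ) * (((d : ℝ) * β + 1 - d) * x))) ^ 2
          / (4 * x * (((d : ℝ) * β + 1 - d) * x))
        = (d : ℝ) * β + 1 - d) := by
  have hd' : (0 : ℝ) < d := Nat.cast_pos.mpr hd
  have he : (0 : ℝ) < e := Nat.cast_pos.mpr (hd.trans hde)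
  have hcone : (d : ℝ) ≤ e * coneAngle d β := le_mul_coneAngle hd' he hthr
  have hγ : 0 < coneAngle d β := pos_of_mul_pos_right (hd'.trans_le hcone) he.le
  exact ⟨fun x y hx hy => coneAngle_le_normalizedVolume (e := e) hβ1.le hγ.le hx hy,
    fun x hx => normalizedVolume_coneAngle_ray hcone hγ.ne' hx⟩

/-- For `d < e` positive integers and `β ≥ β* = 1 - 1/d + 1/e` (jump regime),
the normalized volume `F(x,y) = (x + y - (1-β)·min(dx,ey))²/(4xy)` on the positive
quadrant is bounded below by `dβ + 1 - d`, with equality along the ray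
`y = (dβ + 1 - d)x`. -/
theorem normalized_volume_min_jump (d e : ℕ) (hd : 0 < d) (hde : d < e)
    (β : ℝ) (hβ0 : 0 < β) (hβ1 : β < 1)
    (hthr : 1 - 1 / (d : ℝ) + 1 / (e : ℝ) ≤ β) :
    (∀ x y : ℝ, 0 < x → 0 < y →
      (d : ℝ) * β + 1 - d
        ≤ (x + y - (1 - β) * min ((d : ℝ) * x) ((e : ℝ) * y)) ^ 2 / (4 * x * y)) ∧
    (∀ x : ℝ, 0 < x →
      (x + ((d : ℝ) * β + 1 - d) * x
          - (1 - β) * min ((d : ℝ) * x) ((e : ℝ) * (((d : ℝ) * β + 1 - d) * x))) ^ 2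
          / (4 * x * (((d : ℝ) * β + 1 - d) * x))
        = (d : ℝ) * β + 1 - d) :=
  normalized_volume_min_jump_general d e hd hde β hβ1 hthr
end

section
/- Let β ∈ (0,1), let ψ: [0,∞) → [0,1] be smooth with ψ(s)=0 for s ≤ 1 and ψ(s)=1 for s ≥ 4, and set f(s) = ψ'(s) + sψ''(s). On ℂ² define the Hermitian matrix g with entries g_{11̄} = |z₁|^{2β-2} + ψ(s), g_{12̄} = ψ'(s)z₂z̄₁, g_{22̄} = 1 + |z₁|²f(s), where s = |z₂|². Then det g = |z₁|^{2β-2}(1 + |z₁|²f(s)) + ψ(s) + |z₁|²(f(s)ψ(s) - s·ψ'(s)²); in particular, there exists ε > 0 such that on {|z₁| < ε} × ℂ the matrix g is positive definite. -/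
set_option maxHeartbeats 1000000 in
/-- Determinant and positivity of the model metric interpolating between the flat
conical model and the product metric: with `s = |z₂|²`,
`g₁₁̄ = |z₁|^{2β-2} + ψ(s)`, `g₁₂̄ = ψ'(s)z₂z̄₁`, `g₂₂̄ = 1 + |z₁|²f(s)` where
`f = ψ' + sψ''`, one has
`det g = |z₁|^{2β-2}(1 + |z₁|²f(s)) + ψ(s) + |z₁|²(f(s)ψ(s) - s·ψ'(s)²)`,
and there is `ε > 0` such that `g` is positive definite on `{0 < |z₁| < ε} × ℂ`. -/
theorem model_metric_det_and_posdef (β : ℝ) (hβ : β ∈ Set.Ioo (0 : ℝ) 1)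
    (ψ : ℝ → ℝ) (hψ : ContDiff ℝ (⊤ : ℕ∞) ψ)
    (hψ01 : ∀ s, ψ s ∈ Set.Icc (0 : ℝ) 1)
    (hψ0 : ∀ s ≤ (1 : ℝ), ψ s = 0) (hψ1 : ∀ s, 4 ≤ s → ψ s = 1) :
    (∀ z₁ z₂ : ℂ,
      (‖z₁‖ ^ (2 * β - 2) + ψ (‖z₂‖ ^ 2))
          * (1 + ‖z₁‖ ^ 2
              * (deriv ψ (‖z₂‖ ^ 2)
                + ‖z₂‖ ^ 2 * deriv (deriv ψ) (‖z₂‖ ^ 2)))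
        - Complex.normSq (deriv ψ (‖z₂‖ ^ 2) * z₂ * (starRingEnd ℂ) z₁)
      = ‖z₁‖ ^ (2 * β - 2)
          * (1 + ‖z₁‖ ^ 2
              * (deriv ψ (‖z₂‖ ^ 2)
                + ‖z₂‖ ^ 2 * deriv (deriv ψ) (‖z₂‖ ^ 2)))
        + ψ (‖z₂‖ ^ 2)
        + ‖z₁‖ ^ 2
            * ((deriv ψ (‖z₂‖ ^ 2)
                  + ‖z₂‖ ^ 2 * deriv (deriv ψ) (‖z₂‖ ^ 2))
                * ψ (‖z₂‖ ^ 2)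
              - ‖z₂‖ ^ 2 * (deriv ψ (‖z₂‖ ^ 2)) ^ 2)) ∧
    (∃ ε > (0 : ℝ), ∀ z₁ z₂ : ℂ, 0 < ‖z₁‖ → ‖z₁‖ < ε →
      ∀ v : ℂ × ℂ, v ≠ 0 →
        0 < (‖z₁‖ ^ (2 * β - 2) + ψ (‖z₂‖ ^ 2))
              * Complex.normSq v.1
          + (1 + ‖z₁‖ ^ 2
                * (deriv ψ (‖z₂‖ ^ 2)
                  + ‖z₂‖ ^ 2 * deriv (deriv ψ) (‖z₂‖ ^ 2)))
              * Complex.normSq v.2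
          + 2 * (deriv ψ (‖z₂‖ ^ 2) * z₂ * (starRingEnd ℂ) z₁
              * v.1 * (starRingEnd ℂ) v.2).re) := by
  obtain ⟨hβ0, hβ1⟩ := hβ
  constructor
  · intro z₁ z₂
    simp only [Complex.normSq_mul, Complex.normSq_conj, Complex.normSq_ofReal,
      ← Complex.sq_norm z₁, ← Complex.sq_norm z₂]
    ring
  · -- continuity of the derivatives
    have hψ'c : Continuous (deriv ψ) := hψ.continuous_deriv (by exact_mod_cast le_top)
    have hψ''c : Continuous (deriv (deriv ψ)) := by
      have h1 : ContDiff ℝ (⊤ : ℕ∞) (deriv ψ) := by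
        have := ContDiff.iterate_deriv 1 (hψ.of_le (by simp))
        simpa using this
      exact h1.continuous_deriv (by exact_mod_cast le_top)
    -- derivatives vanish for s > 4
    have hd1 : ∀ s : ℝ, 4 < s → deriv ψ s = 0 := by
      intro s hs
      have h : ψ =ᶠ[nhds s] fun _ => (1 : ℝ) := by
        filter_upwards [Ioi_mem_nhds hs] with t ht using hψ1 t (le_of_lt ht)
      rw [h.deriv_eq, deriv_const]
    have hd2 : ∀ s : ℝ, 4 < s → deriv (deriv ψ) s = 0 := by
      intro s hs
      have h : deriv ψ =ᶠ[nhds s] fun _ => (0 : ℝ) := by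
        filter_upwards [Ioi_mem_nhds hs] with t ht using hd1 t ht
      rw [h.deriv_eq, deriv_const]
    -- uniform bound
    have key : ∃ M : ℝ, 0 ≤ M ∧ ∀ s : ℝ, 0 ≤ s →
        |deriv ψ s + s * deriv (deriv ψ) s| + s * (deriv ψ s) ^ 2 ≤ M := by
      have hFc : Continuous (fun s : ℝ =>
          |deriv ψ s + s * deriv (deriv ψ) s| + s * (deriv ψ s) ^ 2) := by
        fun_prop
      obtain ⟨s₀, hs₀, hmax⟩ := (isCompact_Icc :
          IsCompact (Set.Icc (0 : ℝ) 5)).exists_isMaxOn ⟨0, by norm_num⟩ hFc.continuousOn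
      refine ⟨|deriv ψ s₀ + s₀ * deriv (deriv ψ) s₀| + s₀ * (deriv ψ s₀) ^ 2, ?_, ?_⟩
      · have h0 : (0 : ℝ) ∈ Set.Icc (0 : ℝ) 5 := by norm_num
        have := hmax h0
        simp only [Set.mem_setOf_eq] at this
        have h00 : (0 : ℝ) ≤ |deriv ψ 0 + 0 * deriv (deriv ψ) 0| + 0 * (deriv ψ 0) ^ 2 := by
          positivity
        linarith
      · intro s hs
        rcases le_or_gt s 5 with h | h
        · exact hmax ⟨hs, h⟩
        · have h4 : (4 : ℝ) < s := by linarith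
          rw [hd1 s h4, hd2 s h4]
          simp only [mul_zero, add_zero, abs_zero, zero_add, ne_eq, OfNat.ofNat_ne_zero,
            not_false_eq_true, zero_pow, zero_add]
          have := abs_nonneg (deriv ψ s₀ + s₀ * deriv (deriv ψ) s₀)
          have := mul_nonneg hs₀.1 (sq_nonneg (deriv ψ s₀))
          linarith
    obtain ⟨M, hM0, hFM⟩ := key
    refine ⟨min 1 (1 / (4 * (M + 1))), by positivity, ?_⟩
    intro z₁ z₂ hr0 hrε v hv
    set r := ‖z₁‖ with hrdef
    set s := ‖z₂‖ ^ 2 with hsdef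
    have hs0 : 0 ≤ s := by positivity
    have hr1 : r < 1 := lt_of_lt_of_le hrε (min_le_left _ _)
    have hrM : r ^ 2 * (M + 1) ≤ 1 / 4 := by
      have h2 : r ≤ 1 / (4 * (M + 1)) := le_of_lt (lt_of_lt_of_le hrε (min_le_right _ _))
      have hM1 : (0 : ℝ) < 4 * (M + 1) := by linarith
      have h3 : r * (4 * (M + 1)) ≤ 1 := by rwa [le_div_iff₀ hM1] at h2
      nlinarith [hr0.le, hr1.le]
    have hFs := hFM s hs0
    -- bounds on the two pieces
    have habs0 : 0 ≤ |deriv ψ s + s * deriv (deriv ψ) s| := abs_nonneg _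
    have hsa0 : 0 ≤ s * (deriv ψ s) ^ 2 := by positivity
    have hfb : r ^ 2 * |deriv ψ s + s * deriv (deriv ψ) s| ≤ 1 / 4 := by
      nlinarith [sq_nonneg r, mul_le_mul_of_nonneg_left hFs (sq_nonneg r)]
    have hsb : r ^ 2 * (s * (deriv ψ s) ^ 2) ≤ 1 / 4 := by
      nlinarith [sq_nonneg r, mul_le_mul_of_nonneg_left hFs (sq_nonneg r)]
    -- lower bound for g₂₂̄
    have hD : (3 : ℝ) / 4 ≤ 1 + r ^ 2 * (deriv ψ s + s * deriv (deriv ψ) s) := by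
      have h1 : -(r ^ 2 * |deriv ψ s + s * deriv (deriv ψ) s|)
          ≤ r ^ 2 * (deriv ψ s + s * deriv (deriv ψ) s) := by
        have := neg_abs_le (deriv ψ s + s * deriv (deriv ψ) s)
        nlinarith [sq_nonneg r]
      linarith
    -- lower bound for g₁₁̄
    have hA : (1 : ℝ) ≤ r ^ (2 * β - 2) + ψ s := by
      have h1 : 1 ≤ r ^ (2 * β - 2) :=
        Real.one_le_rpow_of_pos_of_le_one_of_nonpos hr0 hr1.le (by linarith)
      linarith [(hψ01 s).1]
    -- cross term bound
    set x := ‖v.1‖ with hxdef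
    set y := ‖v.2‖ with hydef
    have hx0 : 0 ≤ x := norm_nonneg _
    have hy0 : 0 ≤ y := norm_nonneg _
    set c := |deriv ψ s| * ‖z₂‖ * r with hcdef
    have hc0 : 0 ≤ c := by positivity
    have hc2 : c ^ 2 ≤ 1 / 4 := by
      have h : c ^ 2 = r ^ 2 * (s * (deriv ψ s) ^ 2) := by
        rw [hcdef, hsdef, mul_pow, mul_pow, sq_abs]; ring
      linarith [h ▸ hsb]
    have hc : c ≤ 1 / 2 := by nlinarith
    have hcross : -(c * x * y)
        ≤ (Complex.ofReal (deriv ψ s) * z₂ * (starRingEnd ℂ) z₁ * v.1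
            * (starRingEnd ℂ) v.2).re := by
      have h1 := (abs_le.mp (Complex.abs_re_le_norm
        (Complex.ofReal (deriv ψ s) * z₂ * (starRingEnd ℂ) z₁ * v.1
          * (starRingEnd ℂ) v.2))).1
      have h2 : ‖(Complex.ofReal (deriv ψ s) * z₂ * (starRingEnd ℂ) z₁ * v.1
          * (starRingEnd ℂ) v.2)‖ = c * x * y := by
        simp only [norm_mul, Complex.norm_real, Complex.norm_conj, Real.norm_eq_abs]; rfl
      rw [h2] at h1
      linarith
    -- nondegeneracy of v
    have hxy : 0 < x ^ 2 + y ^ 2 := by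
      have h : v.1 ≠ 0 ∨ v.2 ≠ 0 := by
        by_contra h
        push_neg at h
        exact hv (Prod.ext h.1 h.2)
      rcases h with h | h
      · have : 0 < x := norm_pos_iff.mpr h
        nlinarith [sq_nonneg y]
      · have : 0 < y := norm_pos_iff.mpr h
        nlinarith [sq_nonneg x]
    -- conclude
    rw [← Complex.sq_norm v.1, ← Complex.sq_norm v.2]
    nlinarith [hA, hD, hc, hc0, hcross, hxy, sq_nonneg (3 * x - 2 * y),
      mul_nonneg (mul_nonneg (by linarith : (0:ℝ) ≤ 1/2 - c) hx0) hy0,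
      mul_nonneg (by linarith : (0:ℝ) ≤ (r ^ (2*β-2) + ψ s) - 1) (sq_nonneg x),
      mul_nonneg (by linarith : (0:ℝ) ≤ (1 + r ^ 2 * (deriv ψ s + s * deriv (deriv ψ) s)) - 3/4) (sq_nonneg y)]
end
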